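/- arXiv:1912.11484 — 2 statements merged into one kernel-verified Lean document; each statement's English description precedes it below -/
import Mathlib

section
/- Let 0 < γ < 1 and let φ : [0,∞) → ℝ be continuously differentiable with φ and φ′ of exponential order a, and let v > 0 with v^α > max(a,0). Then the Sadik transform of the Caputo fractional derivative of order γ satisfies S[^cD^γ φ](v,α,β) = v^{γα} S[φ](v,α,β) − v^{(γ−1)α−β} φ(0). -/
/-!
With `s = v ^ α`, the Sadik transform is `v ^ (-β)` times the Laplace transform at `s`, and
the Caputo derivative is `1 / Γ(1 - γ)` times the causal convolution of `u ↦ u ^ (-γ)` with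
`φ'`. The Laplace transform turns this convolution into a product: the first factor is
`Γ(1 - γ) s ^ (γ - 1)` by the Gamma integral, the second is `s · laplace φ s - φ 0` by
integration by parts, where the boundary term at infinity vanishes because `φ` has exponential
order `a < s`.
-/

open Real MeasureTheory Set Filter Topology

open scoped Convolution

def HasExpOrder (f : ℝ → ℝ) (a : ℝ) : Prop :=
  ∃ K > 0, ∀ t ≥ 0, |f t| ≤ K * exp (a * t)

noncomputable def laplace (f : ℝ → ℝ) (s : ℝ) : ℝ :=
  ∫ t in Ioi 0, exp (-t * s) * f t

theorem laplace_const_mul (c : ℝ) (f : ℝ → ℝ) (s : ℝ) :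
    laplace (fun t => c * f t) s = c * laplace f s := by
  simp only [laplace, ← integral_const_mul, mul_left_comm]

section ExpOrder

variable {f : ℝ → ℝ} {a s : ℝ}

theorem HasExpOrder.exists_norm_exp_mul_le (hf : HasExpOrder f a) :
    ∃ K, ∀ t ≥ 0, ‖exp (-t * s) * f t‖ ≤ K * exp (-(s - a) * t) := by
  obtain ⟨K, -, hK⟩ := hf
  refine ⟨K, fun t ht => ?_⟩
  calc ‖exp (-t * s) * f t‖ = exp (-t * s) * |f t| := by
        rw [norm_mul, norm_eq_abs, norm_eq_abs, abs_exp]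
    _ ≤ exp (-t * s) * (K * exp (a * t)) := by gcongr; exact hK t ht
    _ = K * exp (-(s - a) * t) := by rw [mul_left_comm, ← exp_add]; ring_nf

theorem HasExpOrder.integrableOn_exp_mul (hf : HasExpOrder f a)
    (hfm : AEStronglyMeasurable f (volume.restrict (Ioi 0))) (has : a < s) :
    IntegrableOn (fun t => exp (-t * s) * f t) (Ioi 0) := by
  obtain ⟨K, hK⟩ := hf.exists_norm_exp_mul_le (s := s)
  refine ((exp_neg_integrableOn_Ioi 0 (sub_pos.2 has)).const_mul K).mono' ?_ ?_
  · exact (continuous_exp.comp (continuous_neg.mul continuous_const)).aestronglyMeasurable.mul hfm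
  · filter_upwards [ae_restrict_mem measurableSet_Ioi] with t ht
    exact hK t (le_of_lt ht)

theorem HasExpOrder.tendsto_exp_mul (hf : HasExpOrder f a) (has : a < s) :
    Tendsto (fun t => exp (-t * s) * f t) atTop (𝓝 0) := by
  obtain ⟨K, hK⟩ := hf.exists_norm_exp_mul_le (s := s)
  have hdecay : Tendsto (fun t => K * exp (-(s - a) * t)) atTop (𝓝 0) := by
    simpa only [neg_mul, Function.comp_def, id, mul_zero] using
      (tendsto_exp_neg_atTop_nhds_zero.comp
        (tendsto_id.const_mul_atTop (sub_pos.2 has))).const_mul K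
  refine squeeze_zero_norm' ?_ hdecay
  filter_upwards [eventually_ge_atTop 0] with t ht
  exact hK t ht

end ExpOrder

theorem laplace_deriv {φ : ℝ → ℝ} {a s : ℝ} (hφ : ContDiff ℝ 1 φ) (hb : HasExpOrder φ a)
    (hb' : HasExpOrder (deriv φ) a) (has : a < s) :
    laplace (deriv φ) s = s * laplace φ s - φ 0 := by
  have hI := hb.integrableOn_exp_mul hφ.continuous.aestronglyMeasurable has
  have hI' := hb'.integrableOn_exp_mul
    (hφ.continuous_deriv le_rfl).aestronglyMeasurable has
  have hderiv : ∀ t ∈ Ici (0 : ℝ), HasDerivAt (fun t => exp (-t * s) * φ t)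
      (-s * (exp (-t * s) * φ t) + exp (-t * s) * deriv φ t) t := by
    intro t _
    exact (((hasDerivAt_neg t).mul_const s).exp.mul
      (hφ.differentiable one_ne_zero t).hasDerivAt).congr_deriv (by ring)
  have hparts := integral_Ioi_of_hasDerivAt_of_tendsto' hderiv
    ((hI.const_mul (-s)).add hI') (hb.tendsto_exp_mul has)
  rw [integral_add (hI.const_mul (-s)) hI', integral_const_mul] at hparts
  simp only [neg_zero, zero_mul, exp_zero, one_mul, zero_sub] at hparts
  unfold laplace
  linarith

theorem integrableOn_exp_mul_rpow_neg {s γ : ℝ} (hs : 0 < s) (hγ : γ < 1) :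
    IntegrableOn (fun u => exp (-u * s) * u ^ (-γ)) (Ioi 0) := by
  refine (integrableOn_rpow_mul_exp_neg_mul_rpow (s := -γ) (p := 1) (by linarith) one_pos
    hs).congr_fun (fun u _ => ?_) measurableSet_Ioi
  simp only [rpow_one]
  ring_nf

theorem laplace_rpow_neg {s γ : ℝ} (hs : 0 < s) (hγ : γ < 1) :
    laplace (fun u => u ^ (-γ)) s = Gamma (1 - γ) * s ^ (γ - 1) := by
  have hΓ := integral_rpow_mul_exp_neg_mul_Ioi (a := 1 - γ) (by linarith) hs
  rw [one_div, inv_rpow hs.le, ← rpow_neg hs.le, neg_sub] at hΓ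
  rw [laplace, mul_comm, ← hΓ]
  refine setIntegral_congr_fun measurableSet_Ioi (fun u _ => ?_)
  ring_nf

theorem indicator_Ioi_mul_indicator_Ioi_sub (f g : ℝ → ℝ) (t u : ℝ) :
    (Ioi 0).indicator g u * (Ioi 0).indicator f (t - u) =
      (Ioo 0 t).indicator (fun u => g u * f (t - u)) u := by
  simp only [indicator_apply, mem_Ioi, mem_Ioo, sub_pos]
  split_ifs <;> simp_all

theorem convolution_indicator_Ioi (f g : ℝ → ℝ) (t : ℝ) :
    ((Ioi 0).indicator g ⋆[ContinuousLinearMap.mul ℝ ℝ] (Ioi 0).indicator f) t =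
      (Ioi 0).indicator (fun t => ∫ τ in (0 : ℝ)..t, g τ * f (t - τ)) t := by
  simp only [convolution_def, ContinuousLinearMap.mul_apply', indicator_Ioi_mul_indicator_Ioi_sub,
    integral_indicator measurableSet_Ioo]
  by_cases ht : 0 < t
  · rw [indicator_of_mem (mem_Ioi.2 ht), intervalIntegral.integral_of_le ht.le,
      integral_Ioc_eq_integral_Ioo]
  · rw [indicator_of_notMem (show t ∉ Ioi 0 from ht), Ioo_eq_empty ht, Measure.restrict_empty,
      integral_zero_measure]

theorem laplace_convolution {f g : ℝ → ℝ} {s : ℝ}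
    (hf : IntegrableOn (fun t => exp (-t * s) * f t) (Ioi 0))
    (hg : IntegrableOn (fun t => exp (-t * s) * g t) (Ioi 0)) :
    laplace (fun t => ∫ τ in (0 : ℝ)..t, f (t - τ) * g τ) s = laplace f s * laplace g s := by
  set F := fun t => exp (-t * s) * f t
  set G := fun t => exp (-t * s) * g t
  have hweight : ∀ t, exp (-t * s) * ∫ τ in (0 : ℝ)..t, f (t - τ) * g τ =
      ∫ τ in (0 : ℝ)..t, G τ * F (t - τ) := by
    intro t
    rw [← intervalIntegral.integral_const_mul]
    refine intervalIntegral.integral_congr fun τ _ => ?_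
    simp only [F, G]
    rw [show -t * s = -τ * s + -(t - τ) * s by ring, exp_add]
    ring
  calc laplace (fun t => ∫ τ in (0 : ℝ)..t, f (t - τ) * g τ) s
      = ∫ t, ((Ioi 0).indicator G ⋆[ContinuousLinearMap.mul ℝ ℝ] (Ioi 0).indicator F) t := by
        simp only [laplace, hweight, convolution_indicator_Ioi,
          integral_indicator measurableSet_Ioi]
    _ = (∫ t, (Ioi 0).indicator G t) * ∫ t, (Ioi 0).indicator F t :=
        integral_convolution (L := ContinuousLinearMap.mul ℝ ℝ)
          ((integrable_indicator_iff measurableSet_Ioi).2 hg)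
          ((integrable_indicator_iff measurableSet_Ioi).2 hf)
    _ = laplace f s * laplace g s := by
        rw [integral_indicator measurableSet_Ioi, integral_indicator measurableSet_Ioi, mul_comm]
        rfl

theorem sadik_transform_caputo_general (γ : ℝ) (hγ₁ : γ < 1)
    (φ : ℝ → ℝ) (a α β v : ℝ) (hφ : ContDiff ℝ 1 φ)
    (hbound : ∃ K > 0, ∀ t ≥ 0, |φ t| ≤ K * Real.exp (a * t))
    (hbound' : ∃ K > 0, ∀ t ≥ 0, |deriv φ t| ≤ K * Real.exp (a * t))
    (hv : 0 < v) (hva : max a 0 < v ^ α) :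
    v ^ (-β) * ∫ t in Set.Ioi (0:ℝ),
        Real.exp (-t * v ^ α) *
          ((1 / Real.Gamma (1 - γ)) *
            ∫ τ in (0:ℝ)..t, (t - τ) ^ (-γ) * deriv φ τ) =
      v ^ (γ * α) *
          (v ^ (-β) * ∫ t in Set.Ioi (0:ℝ), Real.exp (-t * v ^ α) * φ t)
        - v ^ ((γ - 1) * α - β) * φ 0 := by
  have hs : 0 < v ^ α := (le_max_right a 0).trans_lt hva
  have has : a < v ^ α := (le_max_left a 0).trans_lt hva
  have hΓ : Gamma (1 - γ) ≠ 0 := (Gamma_pos_of_pos (sub_pos.2 hγ₁)).ne'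
  have hφ' : HasExpOrder (deriv φ) a := hbound'
  change v ^ (-β) * laplace (fun t => 1 / Gamma (1 - γ) *
      ∫ τ in (0 : ℝ)..t, (t - τ) ^ (-γ) * deriv φ τ) (v ^ α) =
    v ^ (γ * α) * (v ^ (-β) * laplace φ (v ^ α)) - v ^ ((γ - 1) * α - β) * φ 0
  rw [laplace_const_mul, laplace_convolution (integrableOn_exp_mul_rpow_neg hs hγ₁)
      (hφ'.integrableOn_exp_mul (hφ.continuous_deriv le_rfl).aestronglyMeasurable has),
    laplace_rpow_neg hs hγ₁, laplace_deriv hφ hbound hφ' has]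
  have hpow : v ^ (γ * α) = (v ^ α) ^ (γ - 1) * v ^ α := by
    rw [← rpow_mul hv.le, ← rpow_add hv]
    ring_nf
  have hpow' : v ^ ((γ - 1) * α - β) = v ^ (-β) * (v ^ α) ^ (γ - 1) := by
    rw [← rpow_mul hv.le, ← rpow_add hv]
    ring_nf
  rw [hpow, hpow']
  field_simp

/-- Sadik transform of the Caputo derivative of order `γ ∈ (0,1)`:
`S[ᶜD^γ φ] = v^{γα} S[φ] - v^{(γ-1)α-β} φ(0)`. -/
theorem sadik_transform_caputo (γ : ℝ) (hγ₀ : 0 < γ) (hγ₁ : γ < 1)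
    (φ : ℝ → ℝ) (a α β v : ℝ) (hφ : ContDiff ℝ 1 φ)
    (hbound : ∃ K > 0, ∀ t ≥ 0, |φ t| ≤ K * Real.exp (a * t))
    (hbound' : ∃ K > 0, ∀ t ≥ 0, |deriv φ t| ≤ K * Real.exp (a * t))
    (hα : α ≠ 0) (hv : 0 < v) (hva : max a 0 < v ^ α) :
    v ^ (-β) * ∫ t in Set.Ioi (0:ℝ),
        Real.exp (-t * v ^ α) *
          ((1 / Real.Gamma (1 - γ)) *
            ∫ τ in (0:ℝ)..t, (t - τ) ^ (-γ) * deriv φ τ) =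
      v ^ (γ * α) *
          (v ^ (-β) * ∫ t in Set.Ioi (0:ℝ), Real.exp (-t * v ^ α) * φ t)
        - v ^ ((γ - 1) * α - β) * φ 0 :=
  sadik_transform_caputo_general γ hγ₁ φ a α β v hφ hbound hbound' hv hva
end

section
/- Let 0 < γ < 1, b ∈ ℝ, and y₀ ∈ ℝ. The function y(t) = y₀ E_{γ,1}(b t^γ) = y₀ Σ_{k=0}^∞ (b t^γ)^k / Γ(γk + 1) satisfies the Volterra integral equation y(t) = y₀ + (b/Γ(γ)) ∫₀^t (t−τ)^{γ−1} y(τ) dτ for all t ≥ 0 (equivalently, it solves the Caputo fractional initial value problem ^cD^γ y = b y, y(0) = y₀). -/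
/-!
Expand `E_{γ,1}(bτ^γ)` in the powers `τ^{γk}`. By the Beta integral,
`∫₀^t (t-τ)^{γ-1} τ^{γk} dτ = Γ(γk+1)Γ(γ)/Γ(γk+1+γ) · t^{γk+γ}`,
so integrating term by term turns the right-hand side into `y₀ + y₀ · b t^γ · E_{γ,γ+1}(bt^γ)`,
and the index shift `E_{γ,1}(z) = 1 + z E_{γ,γ+1}(z)` identifies this with `y₀ E_{γ,1}(bt^γ)`.
Termwise integration is justified by absolute convergence: log-convexity of `Γ` gives
`Γ(s+γ) ≥ Γ(s)(s-1)^γ`, so the Mittag-Leffler series pass the ratio test.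
-/

open Real MeasureTheory Filter intervalIntegral

namespace Real

theorem Gamma_mul_rpow_le_Gamma_add {s γ : ℝ} (hγ : 0 < γ) (hs : 1 < s) :
    Gamma s * (s - 1) ^ γ ≤ Gamma (s + γ) := by
  have hs₁ : 0 < s - 1 := by linarith
  have hΓ : Gamma s = (s - 1) * Gamma (s - 1) := by
    simpa using Gamma_add_one hs₁.ne'
  have hslope := convexOn_log_Gamma.slope_mono_adjacent (Set.mem_Ioi.2 hs₁)
    (Set.mem_Ioi.2 (by linarith : 0 < s + γ)) (sub_one_lt s) (lt_add_of_pos_right s hγ)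
  have hlog : log (Gamma s) - log (Gamma (s - 1)) = log (s - 1) := by
    rw [hΓ, log_mul hs₁.ne' (Gamma_pos_of_pos hs₁).ne']
    ring
  simp only [Function.comp, sub_sub_cancel, add_sub_cancel_left, div_one, hlog] at hslope
  have key : log ((s - 1) ^ γ) + log (Gamma s) ≤ log (Gamma (s + γ)) := by
    rw [log_rpow hs₁]
    linarith [(le_div_iff₀' hγ).mp hslope]
  rw [← log_mul (by positivity) (Gamma_pos_of_pos (by linarith)).ne', mul_comm] at key
  exact (log_le_log_iff (by positivity [Gamma_pos_of_pos (by linarith : 0 < s)])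
    (Gamma_pos_of_pos (by linarith))).mp key

end Real

/-- The two-parameter Mittag-Leffler function `E_{α,β}(z)`. -/
noncomputable def mittagLeffler (α β z : ℝ) : ℝ :=
  ∑' k : ℕ, z ^ k / Gamma (α * k + β)

theorem summable_mittagLeffler {α : ℝ} (hα : 0 < α) (β z : ℝ) :
    Summable fun k : ℕ => z ^ k / Gamma (α * k + β) := by
  have hlin : Tendsto (fun k : ℕ => α * k + β - 1) atTop atTop :=
    tendsto_atTop_add_const_right _ _
      (tendsto_atTop_add_const_right _ _ (tendsto_natCast_atTop_atTop.const_mul_atTop hα))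
  refine summable_of_ratio_norm_eventually_le (r := 1 / 2) (by norm_num) ?_
  filter_upwards [hlin.eventually_gt_atTop 0,
    ((tendsto_rpow_atTop hα).comp hlin).eventually_ge_atTop (2 * |z|)] with k hk hgrowth
  have hΓ : 0 < Gamma (α * k + β) := Gamma_pos_of_pos (by linarith)
  have hΓ_succ : 2 * |z| * Gamma (α * k + β) ≤ Gamma (α * ↑(k + 1) + β) := by
    calc 2 * |z| * Gamma (α * k + β) ≤ Gamma (α * k + β) * (α * k + β - 1) ^ α := by
          rw [mul_comm]; exact mul_le_mul_of_nonneg_left hgrowth hΓ.le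
      _ ≤ Gamma (α * k + β + α) := Gamma_mul_rpow_le_Gamma_add hα (by linarith)
      _ = Gamma (α * ↑(k + 1) + β) := by push_cast; ring_nf
  have hΓ' : 0 < Gamma (α * ↑(k + 1) + β) := Gamma_pos_of_pos (by push_cast; linarith)
  rw [norm_div, norm_div, norm_pow, norm_pow, pow_succ, norm_of_nonneg hΓ.le,
    norm_of_nonneg hΓ'.le, div_le_iff₀ hΓ']
  calc ‖z‖ ^ k * ‖z‖
        = 1 / 2 * (‖z‖ ^ k / Gamma (α * k + β)) * (2 * |z| * Gamma (α * k + β)) := by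
          field_simp; rw [norm_eq_abs]
    _ ≤ _ := by gcongr

theorem mittagLeffler_zero (α β : ℝ) : mittagLeffler α β 0 = 1 / Gamma β := by
  rw [mittagLeffler, tsum_eq_single 0 fun k hk => by rw [zero_pow hk, zero_div]]
  simp

theorem mittagLeffler_one_eq_one_add {α : ℝ} (hα : 0 < α) (z : ℝ) :
    mittagLeffler α 1 z = 1 + z * mittagLeffler α (α + 1) z := by
  rw [mittagLeffler, (summable_mittagLeffler hα 1 z).tsum_eq_zero_add, mittagLeffler,
    ← tsum_mul_left]
  simp only [pow_zero, CharP.cast_eq_zero, mul_zero, zero_add, Gamma_one, div_one]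
  congr 1
  refine tsum_congr fun k => ?_
  rw [pow_succ', mul_div_assoc]
  push_cast
  ring_nf

theorem integral_sub_rpow_mul_rpow {α c t : ℝ} (hα : 0 < α) (hc : -1 < c) (ht : 0 < t) :
    ∫ τ in 0..t, (t - τ) ^ (α - 1) * τ ^ c =
      Gamma (c + 1) * Gamma α / Gamma (c + 1 + α) * t ^ (c + α) := by
  have hbeta := Complex.betaIntegral_scaled (c + 1) α ht
  rw [Complex.betaIntegral_eq_Gamma_mul_div _ _ (by simp; linarith) (by simpa using hα)] at hbeta
  apply Complex.ofReal_injective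
  rw [← integral_ofReal, integral_congr (g := fun x : ℝ =>
    (x : ℂ) ^ ((c : ℂ) + 1 - 1) * ((t : ℂ) - x) ^ ((α : ℂ) - 1)), hbeta]
  · rw [show (c : ℂ) + 1 + α - 1 = ((c + α : ℝ) : ℂ) by push_cast; ring,
      ← Complex.ofReal_cpow ht.le]
    push_cast [← Complex.Gamma_ofReal]
    ring
  · intro x hx
    rw [Set.uIcc_of_le ht.le] at hx
    simp only
    rw [Complex.ofReal_mul, Complex.ofReal_cpow (sub_nonneg.2 hx.2), Complex.ofReal_cpow hx.1]
    push_cast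
    ring_nf

theorem intervalIntegrable_sub_rpow_mul_rpow {α c : ℝ} (hα : 0 < α) (hc : 0 ≤ c) (t : ℝ) :
    IntervalIntegrable (fun τ => (t - τ) ^ (α - 1) * τ ^ c) volume 0 t := by
  have hkernel :=
    (intervalIntegrable_rpow' (a := 0) (b := t) (by linarith : -1 < α - 1)).comp_sub_left t
  rw [sub_zero, sub_self] at hkernel
  exact hkernel.symm.mul_continuousOn (continuousOn_id.rpow_const fun _ _ => Or.inr hc)

theorem integral_sub_rpow_mul_tsum {α t : ℝ} (hα : 0 < α) (ht : 0 < t) {a e : ℕ → ℝ}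
    (he : ∀ k, 0 ≤ e k)
    (hsum : Summable fun k =>
      |a k| * (Gamma (e k + 1) * Gamma α / Gamma (e k + 1 + α) * t ^ (e k + α))) :
    ∫ τ in 0..t, (t - τ) ^ (α - 1) * ∑' k, a k * τ ^ e k =
      ∑' k, a k * (Gamma (e k + 1) * Gamma α / Gamma (e k + 1 + α) * t ^ (e k + α)) := by
  have hterm : ∀ (r : ℝ) (k : ℕ), ∫ τ in 0..t, r * ((t - τ) ^ (α - 1) * τ ^ e k) =
      r * (Gamma (e k + 1) * Gamma α / Gamma (e k + 1 + α) * t ^ (e k + α)) := fun r k => by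
    rw [intervalIntegral.integral_const_mul, integral_sub_rpow_mul_rpow hα (by linarith [he k]) ht]
  have hterm_int :
      ∀ k, IntegrableOn (fun τ => a k * ((t - τ) ^ (α - 1) * τ ^ e k)) (Set.Ioc 0 t) :=
    fun k => (intervalIntegrable_iff_integrableOn_Ioc_of_le ht.le).1
      ((intervalIntegrable_sub_rpow_mul_rpow hα (he k) t).const_mul (a k))
  have hterm_norm : ∀ k, ∫ τ in Set.Ioc 0 t, ‖a k * ((t - τ) ^ (α - 1) * τ ^ e k)‖ =
      |a k| * (Gamma (e k + 1) * Gamma α / Gamma (e k + 1 + α) * t ^ (e k + α)) := fun k => by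
    rw [← hterm, integral_of_le ht.le]
    refine setIntegral_congr_fun measurableSet_Ioc fun τ hτ => ?_
    rw [norm_mul, norm_eq_abs, norm_of_nonneg (mul_nonneg (rpow_nonneg (sub_nonneg.2 hτ.2) _)
      (rpow_nonneg hτ.1.le _))]
  rw [integral_of_le ht.le]
  simp_rw [← tsum_mul_left, mul_left_comm _ (a _)]
  rw [← integral_tsum_of_summable_integral_norm hterm_int
    (hsum.congr fun k => (hterm_norm k).symm)]
  exact tsum_congr fun k => by rw [← integral_of_le ht.le, hterm]

theorem integral_sub_rpow_mul_mittagLeffler {α t : ℝ} (hα : 0 < α) (ht : 0 < t) (b : ℝ) :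
    ∫ τ in 0..t, (t - τ) ^ (α - 1) * mittagLeffler α 1 (b * τ ^ α) =
      Gamma α * t ^ α * mittagLeffler α (α + 1) (b * t ^ α) := by
  have hpow : ∀ τ, 0 ≤ τ → ∀ (c : ℝ) (k : ℕ), (c * τ ^ α) ^ k = c ^ k * τ ^ (α * k) :=
    fun τ hτ c k => by rw [mul_pow, rpow_mul_natCast hτ]
  have hterm : ∀ (c : ℝ) (k : ℕ), c ^ k / Gamma (α * k + 1) *
      (Gamma (α * k + 1) * Gamma α / Gamma (α * k + 1 + α) * t ^ (α * k + α)) =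
      Gamma α * t ^ α * ((c * t ^ α) ^ k / Gamma (α * k + (α + 1))) := fun c k => by
    have hΓ : 0 < Gamma (α * k + 1) := Gamma_pos_of_pos (by positivity)
    rw [hpow t ht.le, rpow_add ht, ← add_assoc]
    field_simp
    ring_nf
  have hsum : Summable fun k : ℕ => |b ^ k / Gamma (α * k + 1)| *
      (Gamma (α * k + 1) * Gamma α / Gamma (α * k + 1 + α) * t ^ (α * k + α)) :=
    ((summable_mittagLeffler hα (α + 1) (|b| * t ^ α)).mul_left (Gamma α * t ^ α)).congr
      fun k => by
        rw [abs_div, abs_pow, abs_of_pos (Gamma_pos_of_pos (by positivity)), hterm]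
  have hseries : Set.EqOn (fun τ => (t - τ) ^ (α - 1) * mittagLeffler α 1 (b * τ ^ α))
      (fun τ => (t - τ) ^ (α - 1) * ∑' k : ℕ, b ^ k / Gamma (α * k + 1) * τ ^ (α * k))
      (Set.uIcc 0 t) := fun τ hτ => by
    simp only [mittagLeffler, hpow τ (Set.uIcc_of_le ht.le ▸ hτ).1, mul_div_right_comm]
  rw [integral_congr hseries, integral_sub_rpow_mul_tsum hα ht (fun k => by positivity) hsum,
    mittagLeffler, ← tsum_mul_left]
  exact tsum_congr (hterm b)

theorem mittagLeffler_solves_volterra_general (γ b y₀ : ℝ) (hγ₀ : 0 < γ) :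
    ∀ t ≥ (0:ℝ),
      y₀ * ∑' k : ℕ, (b * t ^ γ) ^ k / Real.Gamma (γ * k + 1) =
        y₀ + (b / Real.Gamma γ) *
          ∫ τ in (0:ℝ)..t, (t - τ) ^ (γ - 1) *
            (y₀ * ∑' k : ℕ, (b * τ ^ γ) ^ k / Real.Gamma (γ * k + 1)) := by
  intro t ht
  change y₀ * mittagLeffler γ 1 (b * t ^ γ) = y₀ + b / Gamma γ *
    ∫ τ in (0:ℝ)..t, (t - τ) ^ (γ - 1) * (y₀ * mittagLeffler γ 1 (b * τ ^ γ))
  rcases ht.eq_or_lt with rfl | ht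
  · simp [zero_rpow hγ₀.ne', mittagLeffler_zero]
  simp_rw [mul_left_comm _ y₀]
  rw [intervalIntegral.integral_const_mul, integral_sub_rpow_mul_mittagLeffler hγ₀ ht,
    mittagLeffler_one_eq_one_add hγ₀]
  field_simp [(Gamma_pos_of_pos hγ₀).ne']

/-- `y(t) = y₀ E_{γ,1}(b t^γ)` solves the Volterra integral equation
`y(t) = y₀ + (b/Γ(γ)) ∫₀^t (t-τ)^{γ-1} y(τ) dτ`, i.e. the Caputo problem
`ᶜD^γ y = b y`, `y(0) = y₀`. -/
theorem mittagLeffler_solves_volterra (γ b y₀ : ℝ) (hγ₀ : 0 < γ) (hγ₁ : γ < 1) :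
    ∀ t ≥ (0:ℝ),
      y₀ * ∑' k : ℕ, (b * t ^ γ) ^ k / Real.Gamma (γ * k + 1) =
        y₀ + (b / Real.Gamma γ) *
          ∫ τ in (0:ℝ)..t, (t - τ) ^ (γ - 1) *
            (y₀ * ∑' k : ℕ, (b * τ ^ γ) ^ k / Real.Gamma (γ * k + 1)) :=
  mittagLeffler_solves_volterra_general γ b y₀ hγ₀
end
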